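/- Let a < b be reals, let V be a compact subset of C([a,b]) with the sup-norm, and for each positive integer m let L_m be the piecewise linear interpolation operator at the uniform nodes x_j = a + j(b−a)/m. Set U_m = L_m(V), W_m = V ∪ U_m, and W = ⋃_{i=1}^∞ W_i. Then W is a closed subset of C([a,b]): if a sequence {w_i} ⊆ W converges in sup-norm to some w₀ ∈ C([a,b]), then w₀ ∈ W. -/

import Mathlib

/-!
Each `L_m` is a convex combination of two values of its argument taken at most one mesh width
`(b - a)/m` away, so `L_m` is `1`-Lipschitz and `‖L_m v - v‖` is bounded by the modulus of
continuity of `v` at `(b - a)/m`. A compact `V ⊆ C([a,b])` is uniformly equicontinuous, hence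
`L_m(V)` lies in the `ε`-neighbourhood of `V` for all but finitely many `m`. A limit point of `W`
therefore lies in a finite union of the compact sets `L_m(V)` or in every `ε`-neighbourhood of
the closed set `V`, i.e. in `W`.
-/

/-- The uniform nodes `x_j = a + j(b−a)/m`, `j = 0, …, m`, of `[a,b]`. -/
noncomputable def node (a b : ℝ) (m j : ℕ) : ℝ := a + j * (b - a) / m

/-- `L` is the piecewise linear interpolation operator on `C([a,b])` at the uniform
nodes `x_j = a + j(b−a)/m`: for `x ∈ [x_j, x_{j+1}]`, `j = 0, …, m−1`,
`(L u)(x) = u(x_j) + ((u(x_{j+1}) − u(x_j))/(x_{j+1} − x_j))(x − x_j)`. -/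
def IsLinInterp (a b : ℝ) (hab : a ≤ b) (m : ℕ)
    (L : C(Set.Icc a b, ℝ) → C(Set.Icc a b, ℝ)) : Prop :=
  ∀ u : C(Set.Icc a b, ℝ), ∀ j : ℕ, j < m →
    ∀ x : Set.Icc a b, node a b m j ≤ (x : ℝ) → (x : ℝ) ≤ node a b m (j + 1) →
      L u x = u (Set.projIcc a b hab (node a b m j)) +
        (u (Set.projIcc a b hab (node a b m (j + 1))) -
            u (Set.projIcc a b hab (node a b m j))) /
          (node a b m (j + 1) - node a b m j) * ((x : ℝ) - node a b m j)

open Set Filter Metric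

theorem isClosed_iUnion_of_eventually_subset_cthickening {X ι : Type*} [PseudoEMetricSpace X]
    {K : Set X} {F : ι → Set X} (hK : IsClosed K) (hF : ∀ i, IsClosed (F i))
    (hKF : K ⊆ ⋃ i, F i) (hlim : ∀ ε > 0, ∀ᶠ i in cofinite, F i ⊆ cthickening ε K) :
    IsClosed (⋃ i, F i) := by
  refine isClosed_of_closure_subset fun w hw => ?_
  by_contra hwF
  refine hwF (hKF ?_)
  rw [← hK.closure_eq, closure_eq_iInter_cthickening]
  refine mem_iInter₂.2 fun ε hε => ?_
  set S := {i | ¬F i ⊆ cthickening ε K}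
  have hS : S.Finite := hlim ε hε
  have hsub : ⋃ i, F i ⊆ (⋃ i ∈ S, F i) ∪ cthickening ε K := by
    refine iUnion_subset fun i => ?_
    by_cases hi : i ∈ S
    · exact (subset_biUnion_of_mem hi).trans subset_union_left
    · exact (not_not.1 hi).trans subset_union_right
  have hwS := closure_minimal hsub
    ((hS.isClosed_biUnion fun i _ => hF i).union isClosed_cthickening) hw
  exact hwS.resolve_left fun h => hwF (iUnion₂_subset_iUnion _ _ h)

theorem IsCompact.uniformEquicontinuous_coe {X Y : Type*} [PseudoMetricSpace X] [CompactSpace X]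
    [PseudoMetricSpace Y] {V : Set C(X, Y)} (hV : IsCompact V) :
    UniformEquicontinuous fun f : V => ⇑(f : C(X, Y)) := by
  rw [Metric.uniformEquicontinuous_iff]
  intro ε hε
  have heval := (hV.prod isCompact_univ).uniformContinuousOn_of_continuous
    (continuous_eval (F := C(X, Y))).continuousOn
  obtain ⟨δ, hδ, h⟩ := Metric.uniformContinuousOn_iff.1 heval ε hε
  refine ⟨δ, hδ, fun x y hxy f => h (f, x) ⟨f.2, trivial⟩ (f, y) ⟨f.2, trivial⟩ ?_⟩
  rwa [Prod.dist_eq, dist_self, max_eq_right dist_nonneg]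

theorem abs_convex_combination_le {p q t D : ℝ} (ht : t ∈ Icc (0 : ℝ) 1) (hp : |p| ≤ D)
    (hq : |q| ≤ D) : |(1 - t) * p + t * q| ≤ D := by
  simpa [smul_eq_mul] using convex_closedBall (0 : ℝ) D (by simpa using hp) (by simpa using hq)
    (sub_nonneg.2 ht.2) ht.1 (sub_add_cancel 1 t)

section Interpolation

variable {a b : ℝ} {m : ℕ}

theorem node_succ_sub_node (j : ℕ) : node a b m (j + 1) - node a b m j = (b - a) / m := by
  simp only [node]
  push_cast
  ring

theorem exists_node_le_le (hm : 0 < m) {x : ℝ} (hx : x ∈ Icc a b) :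
    ∃ j < m, node a b m j ≤ x ∧ x ≤ node a b m (j + 1) := by
  classical
  have hlast : x ≤ node a b m (m - 1 + 1) := by
    simpa [node, Nat.sub_add_cancel hm, hm.ne'] using hx.2
  have hex : ∃ j, x ≤ node a b m (j + 1) := ⟨m - 1, hlast⟩
  refine ⟨Nat.find hex, (Nat.find_min' hex hlast).trans_lt (Nat.sub_lt hm one_pos), ?_,
    Nat.find_spec hex⟩
  rcases h : Nat.find hex with _ | k
  · simpa [node] using hx.1
  · exact le_of_not_ge (Nat.find_min hex (h ▸ k.lt_succ_self))

variable {hab : a ≤ b} {L : C(Icc a b, ℝ) → C(Icc a b, ℝ)}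

theorem IsLinInterp.exists_apply_eq_convex_combination (hL : IsLinInterp a b hab m L)
    (hm : 0 < m) (x : Icc a b) :
    ∃ p q : Icc a b, dist p x ≤ (b - a) / m ∧ dist q x ≤ (b - a) / m ∧
      ∃ t ∈ Icc (0 : ℝ) 1, ∀ u, L u x = (1 - t) * u p + t * u q := by
  obtain ⟨j, hj, hjx, hxj⟩ := exists_node_le_le hm x.2
  have hmesh := node_succ_sub_node (a := a) (b := b) (m := m) j
  have hdist : ∀ y, |y - (x : ℝ)| ≤ (b - a) / m → dist (projIcc a b hab y) x ≤ (b - a) / m :=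
    fun y hy => by
      rw [Subtype.dist_eq, Real.dist_eq, ← projIcc_val hab x]
      exact (abs_projIcc_sub_projIcc hab).trans hy
  refine ⟨projIcc a b hab (node a b m j), projIcc a b hab (node a b m (j + 1)), hdist _ ?_,
    hdist _ ?_, ((x : ℝ) - node a b m j) / ((b - a) / m),
    ⟨div_nonneg ?_ ?_, div_le_one_of_le₀ ?_ ?_⟩, fun u => ?_⟩
  · exact abs_le.2 ⟨by linarith, by linarith⟩
  · exact abs_le.2 ⟨by linarith, by linarith⟩
  iterate 4 linarith
  rw [hL u j hj x hjx hxj, hmesh]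
  ring

theorem IsLinInterp.lipschitzWith (hL : IsLinInterp a b hab m L) (hm : 0 < m) :
    LipschitzWith 1 L := by
  refine LipschitzWith.of_dist_le_mul fun u v => ?_
  rw [NNReal.coe_one, one_mul, ContinuousMap.dist_le dist_nonneg]
  intro x
  obtain ⟨p, q, -, -, t, ht, hLx⟩ := hL.exists_apply_eq_convex_combination hm x
  have hsplit : L u x - L v x = (1 - t) * (u p - v p) + t * (u q - v q) := by
    rw [hLx, hLx]
    ring
  rw [Real.dist_eq, hsplit]
  refine abs_convex_combination_le ht ?_ ?_ <;> rw [← Real.dist_eq] <;>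
    exact ContinuousMap.dist_apply_le_dist _

theorem IsLinInterp.dist_self_le (hL : IsLinInterp a b hab m L) (hm : 0 < m)
    {u : C(Icc a b, ℝ)} {ε : ℝ} (hε : 0 ≤ ε)
    (hu : ∀ x y : Icc a b, dist x y ≤ (b - a) / m → dist (u x) (u y) ≤ ε) :
    dist (L u) u ≤ ε := by
  rw [ContinuousMap.dist_le hε]
  intro x
  obtain ⟨p, q, hp, hq, t, ht, hLx⟩ := hL.exists_apply_eq_convex_combination hm x
  have hsplit : L u x - u x = (1 - t) * (u p - u x) + t * (u q - u x) := by
    rw [hLx]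
    ring
  rw [Real.dist_eq, hsplit]
  refine abs_convex_combination_le ht ?_ ?_ <;> rw [← Real.dist_eq]
  exacts [hu p x hp, hu q x hq]

end Interpolation

theorem eventually_image_subset_cthickening {a b : ℝ} {hab : a ≤ b} {V : Set C(Icc a b, ℝ)}
    (hV : IsCompact V)
    {L : ℕ → C(Icc a b, ℝ) → C(Icc a b, ℝ)} (hL : ∀ m, 0 < m → IsLinInterp a b hab m (L m))
    {ε : ℝ} (hε : 0 < ε) : ∀ᶠ m in atTop, L m '' V ⊆ cthickening ε V := by
  obtain ⟨δ, hδ, hVδ⟩ := Metric.uniformEquicontinuous_iff.1 hV.uniformEquicontinuous_coe ε hε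
  have hmesh : ∀ᶠ m : ℕ in atTop, (b - a) / m < δ :=
    (tendsto_const_div_atTop_nhds_zero_nat (b - a)).eventually (gt_mem_nhds hδ)
  filter_upwards [hmesh, eventually_gt_atTop 0] with m hmδ hm
  rintro _ ⟨v, hv, rfl⟩
  refine mem_cthickening_of_dist_le _ v _ _ hv ((hL m hm).dist_self_le hm hε.le fun x y hxy => ?_)
  exact (hVδ x y (hxy.trans_lt hmδ) ⟨v, hv⟩).le

/-- With `U_m = L_m(V)`, `W_m = V ∪ U_m` and `W = ⋃_{i=1}^∞ W_i`, the set `W` is a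
closed subset of `C([a,b])`: every sup-norm limit of a sequence in `W` belongs
to `W`. -/
theorem W_isClosed (a b : ℝ) (hab : a < b)
    (V : Set C(Set.Icc a b, ℝ)) (hV : IsCompact V)
    (L : ℕ → C(Set.Icc a b, ℝ) → C(Set.Icc a b, ℝ))
    (hL : ∀ i : ℕ, 0 < i → IsLinInterp a b hab.le i (L i))
    (W : Set C(Set.Icc a b, ℝ))
    (hW : W = ⋃ i ∈ {i : ℕ | 1 ≤ i}, (V ∪ (L i) '' V)) :
    IsClosed W := by
  have hW' : W = ⋃ i : ℕ, (V ∪ L (i + 1) '' V) := by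
    rw [hW]
    ext f
    simp only [mem_iUnion, mem_ofPred_eq, exists_prop]
    constructor
    · rintro ⟨i, hi, hf⟩
      exact ⟨i - 1, by rwa [Nat.sub_add_cancel hi]⟩
    · rintro ⟨i, hf⟩
      exact ⟨i + 1, i.succ_pos, hf⟩
  have hLV : ∀ i : ℕ, IsClosed (L (i + 1) '' V) := fun i =>
    (hV.image ((hL _ i.succ_pos).lipschitzWith i.succ_pos).continuous).isClosed
  rw [hW']
  refine isClosed_iUnion_of_eventually_subset_cthickening hV.isClosed
    (fun i => hV.isClosed.union (hLV i)) (fun v hv => mem_iUnion.2 ⟨0, Or.inl hv⟩)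
    fun ε hε => ?_
  rw [Nat.cofinite_eq_atTop]
  filter_upwards [(tendsto_add_atTop_nat 1).eventually
    (eventually_image_subset_cthickening hV hL hε)] with i hi
  exact union_subset (self_subset_cthickening V) hi
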